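/- For a smooth manifold M, the algebra C^∞(M) of smooth real-valued functions on M is geometric: if f ∈ C^∞(M) satisfies x(f) = 0 for every ℝ-algebra homomorphism x : C^∞(M) → ℝ, then f = 0. -/

import Mathlib

open scoped Manifold
local notation "∞" => (⊤ : ℕ∞)

/-- For a smooth (Hausdorff, paracompact) manifold `M`, the algebra `C^∞(M)` of smooth
real-valued functions is geometric: if `x f = 0` for every ℝ-algebra homomorphism
`x : C^∞(M) → ℝ`, then `f = 0`. -/
theorem smooth_functions_geometric {E : Type*} [NormedAddCommGroup E] [NormedSpace ℝ E]
    {H : Type*} [TopologicalSpace H] (I : ModelWithCorners ℝ E H)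
    {M : Type*} [TopologicalSpace M] [ChartedSpace H M] [IsManifold I (⊤ : ℕ∞) M]
    [T2Space M] [ParacompactSpace M]
    (f : C^∞⟮I, M; ℝ⟯) (hf : ∀ x : C^∞⟮I, M; ℝ⟯ →ₐ[ℝ] ℝ, x f = 0) : f = 0 := by
  ext p
  exact hf { toFun := fun g => g p
             map_one' := rfl
             map_mul' := fun _ _ => rfl
             map_zero' := rfl
             map_add' := fun _ _ => rfl
             commutes' := fun _ => rfl }
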